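/- arXiv:2111.11903 — 2 statements merged into one kernel-verified Lean document; each statement's English description precedes it below -/
import Mathlib

section
/- For n ≥ ℓ ≥ 1, the coefficient of z^{n-ℓ} in A(z)·B(z)^{2ℓ-2} equals ((n+ℓ)/(2n)) · binomial(2n, n-ℓ), where B(z) is the Catalan generating function and A(z) = 2z B'(z) + B(z). -/
open PowerSeries Finset

/-- The generating function of the Catalan numbers. -/
noncomputable def catalanSeries : PowerSeries ℚ := PowerSeries.mk fun n => (catalan n : ℚ)

/-- `A(z) = 2z B'(z) + B(z)`, the generating function of doubly rooted plane trees. -/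
noncomputable def doublyRootedSeries : PowerSeries ℚ :=
  2 * PowerSeries.X * PowerSeries.derivativeFun _root_.catalanSeries + _root_.catalanSeries

lemma catalanSeries_eq : _root_.catalanSeries = 1 + X * _root_.catalanSeries ^ 2 := by
  ext n
  cases n with
  | zero => simp [_root_.catalanSeries]
  | succ n =>
    rw [map_add, coeff_succ_X_mul, sq, coeff_mul]
    simp only [_root_.catalanSeries, coeff_mk, coeff_one, Nat.succ_ne_zero, if_false, zero_add]
    rw [catalan_succ']
    push_cast
    rfl

lemma derivativeFun_X' : PowerSeries.derivativeFun (X : PowerSeries ℚ) = 1 := by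
  ext n
  show (coeff n) ((derivative ℚ) X) = _
  rw [coeff_derivative]
  cases n <;> simp [coeff_X]

lemma deriv_catalanSeries :
    PowerSeries.derivativeFun _root_.catalanSeries
      = _root_.catalanSeries ^ 2 + 2 * X * _root_.catalanSeries * PowerSeries.derivativeFun _root_.catalanSeries := by
  conv_lhs => rw [catalanSeries_eq]
  rw [derivativeFun_add, derivativeFun_one, derivativeFun_mul, derivativeFun_X', sq,
    derivativeFun_mul]
  simp only [smul_eq_mul]
  ring

lemma doublyRooted_eq :
    doublyRootedSeries = _root_.catalanSeries + 2 * X * doublyRootedSeries * _root_.catalanSeries := by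
  rw [doublyRootedSeries]
  linear_combination (2 * (X : PowerSeries ℚ)) * deriv_catalanSeries

lemma coeff_zero_catalanSeries : PowerSeries.constantCoeff (R := ℚ) _root_.catalanSeries = 1 := by
  simp [_root_.catalanSeries, ← coeff_zero_eq_constantCoeff]

lemma coeff_catalan_pow (m : ℕ) (hm : 1 ≤ m) : ∀ k : ℕ,
    (PowerSeries.coeff (R := ℚ) m) (_root_.catalanSeries ^ k)
      = (k : ℚ) / (2 * m + k) * Nat.choose (2 * m + k) m := by
  induction m with
  | zero => omega
  | succ m ihm =>
    intro k
    induction k with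
    | zero =>
      simp [coeff_one]
    | succ k ihk =>
      have step : _root_.catalanSeries ^ (k + 1) = _root_.catalanSeries ^ k + X * _root_.catalanSeries ^ (k + 2) := by
        calc _root_.catalanSeries ^ (k+1) = _root_.catalanSeries ^ k * (1 + X * _root_.catalanSeries ^ 2) := by
              rw [← catalanSeries_eq]; ring
          _ = _ := by ring
      rw [step, map_add, coeff_succ_X_mul, ihk]
      rcases Nat.eq_zero_or_pos m with hm0 | hm0
      · subst hm0
        have h0 : (PowerSeries.coeff (R := ℚ) 0) (_root_.catalanSeries ^ (k + 2)) = 1 := by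
          rw [coeff_zero_eq_constantCoeff, map_pow, coeff_zero_catalanSeries, one_pow]
        rw [h0]
        have h1 : Nat.choose (2 * 1 + (k + 1)) 1 = k + 3 := by
          rw [Nat.choose_one_right]; omega
        have h2 : Nat.choose (2 * 1 + k) 1 = k + 2 := by
          rw [Nat.choose_one_right]; omega
        rw [h1, h2]
        have hk2 : (k : ℚ) + 2 ≠ 0 := by positivity
        have hk3 : (k : ℚ) + 3 ≠ 0 := by positivity
        push_cast
        field_simp
        ring
      · rw [ihm hm0 (k + 2)]
        have e1 : 2 * m + (k + 2) = 2 * (m + 1) + k := by omega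
        rw [e1]
        have key := Nat.choose_succ_right_eq (2 * (m + 1) + k) m
        have hsub : 2 * (m + 1) + k - m = m + k + 2 := by omega
        rw [hsub] at key
        have keyQ : (Nat.choose (2 * (m + 1) + k) (m + 1) : ℚ) * (m + 1)
            = (Nat.choose (2 * (m + 1) + k) m : ℚ) * (m + k + 2) := by
          exact_mod_cast congrArg (Nat.cast : ℕ → ℚ) key
        have pascal : Nat.choose (2 * (m + 1) + (k + 1)) (m + 1)
            = Nat.choose (2 * (m + 1) + k) m + Nat.choose (2 * (m + 1) + k) (m + 1) := by
          have h := Nat.choose_succ_succ (2 * (m + 1) + k) m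
          have e : 2 * (m + 1) + (k + 1) = 2 * (m + 1) + k + 1 := by omega
          rw [e, h]
        rw [pascal]
        have hD : (2 : ℚ) * (m + 1) + k ≠ 0 := by positivity
        have hD1 : (2 : ℚ) * (m + 1) + (k + 1) ≠ 0 := by positivity
        push_cast at keyQ hD hD1 ⊢
        field_simp
        linear_combination (-2 * (2 * (m : ℚ) + k + 2)) * keyQ

lemma coeff_zero_doublyRooted : PowerSeries.constantCoeff (R := ℚ) doublyRootedSeries = 1 := by
  simp [doublyRootedSeries, coeff_zero_catalanSeries]

lemma coeff_doublyRooted_mul_pow (m : ℕ) : ∀ k : ℕ,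
    (PowerSeries.coeff (R := ℚ) m) (doublyRootedSeries * _root_.catalanSeries ^ k)
      = Nat.choose (2 * m + k + 1) m := by
  induction m with
  | zero =>
    intro k
    rw [coeff_zero_eq_constantCoeff, map_mul, map_pow, coeff_zero_doublyRooted,
      coeff_zero_catalanSeries]
    simp
  | succ m ihm =>
    intro k
    have step : doublyRootedSeries * _root_.catalanSeries ^ k
        = _root_.catalanSeries ^ (k + 1) + (X * (doublyRootedSeries * _root_.catalanSeries ^ (k + 1))
            + X * (doublyRootedSeries * _root_.catalanSeries ^ (k + 1))) := by
      calc doublyRootedSeries * _root_.catalanSeries ^ k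
          = (_root_.catalanSeries + 2 * X * doublyRootedSeries * _root_.catalanSeries) * _root_.catalanSeries ^ k := by
            rw [← doublyRooted_eq]
        _ = _ := by ring
    rw [step, map_add, map_add, coeff_succ_X_mul, ihm (k + 1),
      coeff_catalan_pow (m + 1) (by omega) (k + 1)]
    have key := Nat.add_one_mul_choose_eq (2 * m + k + 2) m
    have keyQ : ((2 * m + k + 3 : ℕ) : ℚ) * Nat.choose (2 * m + k + 2) m
        = (Nat.choose (2 * m + k + 3) (m + 1) : ℚ) * (m + 1) := by
      exact_mod_cast congrArg (Nat.cast : ℕ → ℚ) key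
    have e1 : 2 * (m + 1) + (k + 1) = 2 * m + k + 3 := by omega
    have e2 : 2 * m + (k + 1) + 1 = 2 * m + k + 2 := by omega
    have e3 : 2 * (m + 1) + k + 1 = 2 * m + k + 3 := by omega
    rw [e1, e2, e3]
    have hne : (2 : ℚ) * m + k + 3 ≠ 0 := by positivity
    push_cast at keyQ ⊢
    field_simp
    linarith [keyQ]

/-- For `n ≥ ℓ ≥ 1`, `[z^{n-ℓ}] (A(z) B(z)^{2ℓ-2}) = ((n+ℓ)/(2n)) * C(2n, n-ℓ)`. -/
theorem coeff_doublyRooted_mul_catalan_pow (n ℓ : ℕ) (hℓ : 1 ≤ ℓ) (hn : ℓ ≤ n) :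
    (PowerSeries.coeff (R := ℚ) (n - ℓ)) (doublyRootedSeries * _root_.catalanSeries ^ (2 * ℓ - 2))
      = ((n : ℚ) + ℓ) / (2 * n) * (Nat.choose (2 * n) (n - ℓ)) := by
  rw [coeff_doublyRooted_mul_pow (n - ℓ) (2 * ℓ - 2)]
  have e1 : 2 * (n - ℓ) + (2 * ℓ - 2) + 1 = 2 * n - 1 := by omega
  rw [e1]
  have key := Nat.choose_mul_succ_eq (2 * n - 1) (n - ℓ)
  have e2 : 2 * n - 1 + 1 = 2 * n := by omega
  have e3 : 2 * n - (n - ℓ) = n + ℓ := by omega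
  rw [e2, e3] at key
  have keyQ : (Nat.choose (2 * n - 1) (n - ℓ) : ℚ) * (2 * n)
      = (Nat.choose (2 * n) (n - ℓ) : ℚ) * (n + ℓ) := by
    exact_mod_cast congrArg (Nat.cast : ℕ → ℚ) key
  have hn1 : (1 : ℚ) ≤ n := by exact_mod_cast le_trans hℓ hn
  have h2n : (2 : ℚ) * n ≠ 0 := by positivity
  field_simp
  linarith [keyQ]
end

section
/- Suppose g < n/3 and let σ be a uniformly random permutation of [n] with all cycles of odd length and exactly n - 2g cycles. Then for any finitely supported sequence (α_ν)_{ν≥3, ν odd} of non-negative integers, E[∏_ν (N_ν)_{α_ν}] ≤ ∏_ν λ_ν^{α_ν}, where (x)_r denotes the falling factorial, N_ν is the number of ν-cycles of σ, and λ_ν = (3g)^{(ν-1)/2}/(ν (n-3g)^{(ν-3)/2}). -/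
/-- The full cycle type of a permutation of `Fin n`: the multiset of the lengths of all its
cycles, including its fixed points as cycles of length `1`. -/
def fullCycleType {n : ℕ} (σ : Equiv.Perm (Fin n)) : Multiset ℕ :=
  σ.cycleType + Multiset.replicate (Finset.univ.filter fun a => σ a = a).card 1

/-- The set `𝔖ᶜ_{n,m}` of permutations of `[n]` all of whose cycles have odd length and
which have exactly `m` cycles. -/
def oddCyclePerms (n m : ℕ) : Finset (Equiv.Perm (Fin n)) :=
  Finset.univ.filter fun σ =>
    (∀ ν ∈ fullCycleType σ, Odd ν) ∧ Multiset.card (fullCycleType σ) = m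

namespace OddCycleProof

open Equiv Equiv.Perm Finset

lemma card_fix {n : ℕ} (σ : Equiv.Perm (Fin n)) :
    (Finset.univ.filter fun a => σ a = a).card = n - σ.support.card := by
  have : (Finset.univ.filter fun a => σ a = a) = σ.supportᶜ := by
    ext a; simp [Equiv.Perm.mem_support]
  rw [this, Finset.card_compl, Fintype.card_fin]

lemma fullCycleType_eq {n : ℕ} (σ : Equiv.Perm (Fin n)) :
    fullCycleType σ = σ.cycleType + Multiset.replicate (n - σ.cycleType.sum) 1 := by
  rw [fullCycleType, card_fix, Equiv.Perm.sum_cycleType]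

lemma mem_oddCyclePerms {n m : ℕ} {σ : Equiv.Perm (Fin n)} :
    σ ∈ oddCyclePerms n m ↔
      (∀ ν ∈ fullCycleType σ, Odd ν) ∧ Multiset.card (fullCycleType σ) = m := by
  simp [oddCyclePerms]

lemma count_fullCycleType_of_ne_one {n : ℕ} (σ : Equiv.Perm (Fin n)) {ν : ℕ} (hν : ν ≠ 1) :
    (fullCycleType σ).count ν = σ.cycleType.count ν := by
  rw [fullCycleType, Multiset.count_add, Multiset.count_replicate, if_neg (fun h => hν h.symm), Nat.add_zero]

lemma nu_mul_count {n : ℕ} (σ : Equiv.Perm (Fin n)) {ν : ℕ} (hν : 2 ≤ ν) :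
    (Finset.univ.filter fun a => (σ.cycleOf a).support.card = ν).card
      = ν * (fullCycleType σ).count ν := by
  classical
  rw [count_fullCycleType_of_ne_one σ (by omega)]
  have hct : σ.cycleType.count ν
      = (σ.cycleFactorsFinset.filter fun c => ν = c.support.card).card := by
    rw [Equiv.Perm.cycleType]
    rw [Multiset.count_map]
    rfl
  rw [hct]
  rw [Finset.card_eq_sum_card_fiberwise
    (f := fun a => σ.cycleOf a)
    (t := σ.cycleFactorsFinset.filter fun c => ν = c.support.card) ?_]
  · rw [Finset.sum_congr rfl (g := fun _ => ν) ?_, Finset.sum_const, smul_eq_mul, mul_comm]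
    intro c hc
    rw [Finset.mem_filter] at hc
    have hfiber : ((Finset.univ.filter fun a => (σ.cycleOf a).support.card = ν).filter
        fun a => σ.cycleOf a = c) = c.support := by
      ext a
      simp only [Finset.mem_filter, Finset.mem_univ, true_and]
      constructor
      · rintro ⟨hcard, rfl⟩
        rw [Equiv.Perm.mem_support_cycleOf_iff]
        refine ⟨Equiv.Perm.SameCycle.refl _ _, ?_⟩
        by_contra hna
        rw [(Equiv.Perm.cycleOf_eq_one_iff σ).mpr (Equiv.Perm.notMem_support.mp hna)] at hcard
        simp at hcard
        omega
      · intro ha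
        have hc' := Equiv.Perm.cycle_is_cycleOf ha hc.1
        exact ⟨by rw [← hc', ← hc.2], hc'.symm⟩
    rw [hfiber, ← hc.2]
  · intro a ha
    rw [Finset.mem_coe, Finset.mem_filter] at ha
    rw [Finset.mem_coe, Finset.mem_filter]
    have hasupp : a ∈ σ.support := by
      by_contra hna
      have h2 := ha.2
      rw [(Equiv.Perm.cycleOf_eq_one_iff σ).mpr (Equiv.Perm.notMem_support.mp hna)] at h2
      simp at h2
      omega
    exact ⟨Equiv.Perm.cycleOf_mem_cycleFactorsFinset_iff.mpr hasupp, ha.2.symm⟩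

lemma core_sum {n : ℕ} (T : Finset (Fin n)) (k : ℕ) (hT : T.card = k) (F : Multiset ℕ → ℕ) :
    ∑ τ : Equiv.Perm (Fin n), (if τ.support ⊆ T then F τ.cycleType else 0)
      = ∑ τ' : Equiv.Perm (Fin k), F τ'.cycleType := by
  classical
  rw [← Finset.sum_filter]
  have e : Fin k ≃ {x // x ∈ T} := (T.orderIsoOfFin hT).toEquiv
  refine (Finset.sum_bij (fun (τ' : Equiv.Perm (Fin k)) _ => τ'.extendDomain e) ?_ ?_ ?_ ?_).symm
  · intro τ' _
    simp only [Finset.mem_filter, Finset.mem_univ, true_and]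
    rw [Equiv.Perm.support_extend_domain]
    intro x hx
    simp only [Finset.mem_map] at hx
    obtain ⟨y, -, rfl⟩ := hx
    exact Subtype.coe_prop _
  · intro a _ b _ hab
    exact Equiv.Perm.extendDomainHom_injective e (by simpa [Equiv.Perm.extendDomainHom] using hab)
  · intro τ hτ
    simp only [Finset.mem_filter, Finset.mem_univ, true_and] at hτ
    have h₁ : ∀ x, x ∈ T ↔ τ x ∈ T := by
      intro x
      constructor
      · intro hx
        by_cases hs : x ∈ τ.support
        · exact hτ (Equiv.Perm.apply_mem_support.mpr hs)
        · rwa [Equiv.Perm.notMem_support.mp hs]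
      · intro hx
        by_cases hs : x ∈ τ.support
        · exact hτ hs
        · rwa [Equiv.Perm.notMem_support.mp hs] at hx
    refine ⟨e.symm.permCongr (τ.subtypePerm (fun x => (h₁ x).symm)), Finset.mem_univ _, ?_⟩
    ext x
    by_cases hx : x ∈ T
    · rw [Equiv.Perm.extendDomain_apply_subtype _ e hx]
      simp [Equiv.permCongr_apply, Equiv.Perm.subtypePerm_apply]
    · rw [Equiv.Perm.extendDomain_apply_not_subtype _ e hx]
      exact congrArg _ (Equiv.Perm.notMem_support.mp (fun hs => hx (hτ hs))).symm
  · intro τ' _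
    rw [Equiv.Perm.cycleType_extendDomain]

/-- condition on a cycle type `M` saying that the corresponding permutation of `Fin k`
is in `oddCyclePerms k m'`, together with the value `G (fullCycleType ·)`. -/
def FF (k m' : ℕ) (G : Multiset ℕ → ℕ) (M : Multiset ℕ) : ℕ :=
  if (∀ ν ∈ M + Multiset.replicate (k - M.sum) 1, Odd ν) ∧
      Multiset.card M + (k - M.sum) = m' then
    G (M + Multiset.replicate (k - M.sum) 1) else 0

lemma core_sum_odd {n : ℕ} (T : Finset (Fin n)) (k m' : ℕ) (hT : T.card = k)
    (G : Multiset ℕ → ℕ) :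
    ∑ τ : Equiv.Perm (Fin n), (if τ.support ⊆ T then FF k m' G τ.cycleType else 0)
      = ∑ τ' ∈ oddCyclePerms k m', G (fullCycleType τ') := by
  rw [core_sum T k hT]
  rw [oddCyclePerms, Finset.sum_filter]
  apply Finset.sum_congr rfl
  intro τ' _
  rw [FF, fullCycleType_eq]
  congr 1
  rw [Multiset.card_add, Multiset.card_replicate]

lemma count_one_fullCycleType {n : ℕ} (σ : Equiv.Perm (Fin n)) :
    (fullCycleType σ).count 1 = n - σ.support.card := by
  rw [fullCycleType, Multiset.count_add, Multiset.count_replicate, if_pos rfl, card_fix]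
  have : Multiset.count 1 σ.cycleType = 0 := by
    rw [Multiset.count_eq_zero]
    intro h
    have := Equiv.Perm.two_le_of_mem_cycleType h
    omega
  omega

lemma remove_fixed_point {n m : ℕ} (hm : 1 ≤ m) (G : Multiset ℕ → ℕ) :
    ∑ σ ∈ oddCyclePerms n m, ((fullCycleType σ).count 1) * G ((fullCycleType σ).erase 1)
      = n * ∑ τ ∈ oddCyclePerms (n - 1) (m - 1), G (fullCycleType τ) := by
  classical
  have key : ∀ a : Fin n,
      (∑ σ : Equiv.Perm (Fin n),
        if σ ∈ oddCyclePerms n m ∧ σ a = a then G ((fullCycleType σ).erase 1) else 0)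
      = ∑ τ ∈ oddCyclePerms (n - 1) (m - 1), G (fullCycleType τ) := by
    intro a
    rw [← core_sum_odd {a}ᶜ (n - 1) (m - 1) (by simp [Finset.card_compl]) G]
    apply Finset.sum_congr rfl
    intro σ _
    have hsub : σ.support ⊆ {a}ᶜ ↔ σ a = a := by
      constructor
      · intro h
        by_contra hc
        have : a ∈ σ.support := Equiv.Perm.mem_support.mpr hc
        simpa using h this
      · intro h x hx
        simp only [Finset.mem_compl, Finset.mem_singleton]
        rintro rfl
        exact Equiv.Perm.mem_support.mp hx h
    by_cases hfix : σ a = a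
    · rw [if_pos (hsub.mpr hfix)]
      -- now compare the two ifs
      have hs : σ.cycleType.sum ≤ n - 1 := by
        have h1 : σ.support ⊆ {a}ᶜ := hsub.mpr hfix
        have := Finset.card_le_card h1
        rw [Equiv.Perm.sum_cycleType]
        simpa [Finset.card_compl] using this
      have hq : n - σ.cycleType.sum = ((n - 1) - σ.cycleType.sum) + 1 := by
        have : σ.cycleType.sum ≤ n - 1 := hs
        have hn : 1 ≤ n := by
          rcases Nat.eq_zero_or_pos n with h | h
          · exact absurd a.2 (by simp [h])
          · exact h
        omega
      have hFCT : fullCycleType σ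
          = 1 ::ₘ (σ.cycleType + Multiset.replicate ((n - 1) - σ.cycleType.sum) 1) := by
        rw [fullCycleType_eq, hq, Multiset.replicate_succ]
        rw [Multiset.add_cons]
      have herase : (fullCycleType σ).erase 1
          = σ.cycleType + Multiset.replicate ((n - 1) - σ.cycleType.sum) 1 := by
        rw [hFCT, Multiset.erase_cons_head]
      rw [FF]
      have hcond : σ ∈ oddCyclePerms n m ↔
          ((∀ ν ∈ σ.cycleType + Multiset.replicate ((n - 1) - σ.cycleType.sum) 1, Odd ν) ∧
            Multiset.card σ.cycleType + ((n - 1) - σ.cycleType.sum) = m - 1) := by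
        rw [oddCyclePerms, Finset.mem_filter]
        simp only [Finset.mem_univ, true_and]
        rw [hFCT]
        constructor
        · rintro ⟨hodd, hcard⟩
          refine ⟨fun ν hν => hodd ν (Multiset.mem_cons_of_mem hν), ?_⟩
          rw [Multiset.card_cons, Multiset.card_add, Multiset.card_replicate] at hcard
          omega
        · rintro ⟨hodd, hcard⟩
          refine ⟨fun ν hν => ?_, ?_⟩
          · rcases Multiset.mem_cons.mp hν with h | h
            · rw [h]; exact odd_one
            · exact hodd ν h
          · rw [Multiset.card_cons, Multiset.card_add, Multiset.card_replicate]
            omega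
      by_cases hc : σ ∈ oddCyclePerms n m
      · rw [if_pos ⟨hc, hfix⟩, if_pos (hcond.mp hc), herase]
      · rw [if_neg (fun h => hc h.1), if_neg (fun h => hc (hcond.mpr h))]
    · rw [if_neg (fun h => hfix (hsub.mp h)), if_neg (fun h => hfix h.2)]
  calc ∑ σ ∈ oddCyclePerms n m, ((fullCycleType σ).count 1) * G ((fullCycleType σ).erase 1)
      = ∑ σ : Equiv.Perm (Fin n), ∑ a : Fin n,
          (if σ ∈ oddCyclePerms n m ∧ σ a = a then G ((fullCycleType σ).erase 1) else 0) := by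
        have hswap : ∀ σ : Equiv.Perm (Fin n),
            (∑ a : Fin n, if σ ∈ oddCyclePerms n m ∧ σ a = a
                then G ((fullCycleType σ).erase 1) else 0)
            = (if σ ∈ oddCyclePerms n m
                then ((fullCycleType σ).count 1) * G ((fullCycleType σ).erase 1) else 0) := by
          intro σ
          by_cases h : σ ∈ oddCyclePerms n m
          · simp only [h, true_and, if_pos]
            rw [← Finset.sum_filter, Finset.sum_const, smul_eq_mul, card_fix,
              ← count_one_fullCycleType]
          · simp [h]
        simp only [hswap]
        rw [Finset.sum_ite_mem, Finset.univ_inter]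
    _ = n * ∑ τ ∈ oddCyclePerms (n - 1) (m - 1), G (fullCycleType τ) := by
        rw [Finset.sum_comm]
        simp only [key]
        rw [Finset.sum_const, Finset.card_univ, Fintype.card_fin, smul_eq_mul]

section L1

variable {n : ℕ} {ν : ℕ}

/-- the list of the orbit of `a` under `σ`, as an embedding, when the orbit has size `ν`;
junk value otherwise. -/
noncomputable def orbEmb (hνn : ν ≤ n) (σ : Equiv.Perm (Fin n)) (a : Fin n) : Fin ν ↪ Fin n :=
  if h : (σ.cycleOf a).support.card = ν then
    ⟨fun i => (σ ^ (i : ℕ)) a, by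
      intro i j hij
      have hlen : (σ.toList a).length = ν := by rw [Equiv.Perm.length_toList, h]
      have gi : (σ.toList a).get ⟨(i : ℕ), by omega⟩ = (σ ^ (i : ℕ)) a :=
        Equiv.Perm.getElem_toList (p := σ) (x := a) (i : ℕ) _
      have gj : (σ.toList a).get ⟨(j : ℕ), by omega⟩ = (σ ^ (j : ℕ)) a :=
        Equiv.Perm.getElem_toList (p := σ) (x := a) (j : ℕ) _
      have hinj := List.nodup_iff_injective_get.mp (Equiv.Perm.nodup_toList σ a)
      have heq := hinj (gi.trans (hij.trans gj.symm))
      have : (i : ℕ) = (j : ℕ) := by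
        have := congrArg Fin.val heq
        simpa using this
      exact Fin.ext this⟩
  else Fin.castLEEmb hνn

lemma orbEmb_apply (hνn : ν ≤ n) (σ : Equiv.Perm (Fin n)) (a : Fin n)
    (h : (σ.cycleOf a).support.card = ν) (i : Fin ν) :
    orbEmb hνn σ a i = (σ ^ (i : ℕ)) a := by
  rw [orbEmb, dif_pos h]; rfl

lemma ofFn_orbEmb (hνn : ν ≤ n) (σ : Equiv.Perm (Fin n)) (a : Fin n)
    (h : (σ.cycleOf a).support.card = ν) :
    List.ofFn (orbEmb hνn σ a) = σ.toList a := by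
  apply List.ext_get
  · rw [List.length_ofFn, Equiv.Perm.length_toList, h]
  · intro i h1 h2
    rw [List.get_ofFn, List.get_eq_getElem, Equiv.Perm.getElem_toList (p := σ) (x := a) i h2]
    rw [orbEmb_apply hνn σ a h]
    rfl

end L1

section L1main

variable {n ν m : ℕ}

/-- the `ν`-cycle associated with an embedding `Fin ν ↪ Fin n`. -/
def cyc (f : Fin ν ↪ Fin n) : Equiv.Perm (Fin n) := (List.ofFn f).formPerm

/-- the range of an embedding, as a finset. -/
def Tset (f : Fin ν ↪ Fin n) : Finset (Fin n) := Finset.univ.map f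

lemma nodup_ofFn_emb (f : Fin ν ↪ Fin n) : (List.ofFn f).Nodup :=
  List.nodup_ofFn.mpr f.injective

lemma toFinset_ofFn (f : Fin ν ↪ Fin n) : (List.ofFn f).toFinset = Tset f := by
  ext x
  simp [Tset, List.mem_ofFn]

lemma card_Tset (f : Fin ν ↪ Fin n) : (Tset f).card = ν := by
  simp [Tset]

lemma isCycle_cyc (hν : 2 ≤ ν) (f : Fin ν ↪ Fin n) : (cyc f).IsCycle :=
  List.isCycle_formPerm (nodup_ofFn_emb f) (by rw [List.length_ofFn]; exact hν)

lemma support_cyc (hν : 2 ≤ ν) (f : Fin ν ↪ Fin n) : (cyc f).support = Tset f := by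
  rw [cyc, List.support_formPerm_of_nodup _ (nodup_ofFn_emb f), toFinset_ofFn]
  intro x hx
  have := congrArg List.length hx
  rw [List.length_ofFn] at this
  simp at this
  omega

lemma mem_Tset (f : Fin ν ↪ Fin n) (i : Fin ν) : f i ∈ Tset f := by
  simp [Tset]

lemma tau_fix_of_subset {f : Fin ν ↪ Fin n} {τ : Equiv.Perm (Fin n)}
    (hτ : τ.support ⊆ (Tset f)ᶜ) {x : Fin n} (hx : x ∈ Tset f) : τ x = x := by
  apply Equiv.Perm.notMem_support.mp
  intro hs
  exact absurd hx (by simpa using hτ hs)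

lemma cyc_mem_factors (hν : 2 ≤ ν) (f : Fin ν ↪ Fin n) {τ : Equiv.Perm (Fin n)}
    (hτ : τ.support ⊆ (Tset f)ᶜ) : cyc f ∈ (cyc f * τ).cycleFactorsFinset := by
  rw [Equiv.Perm.mem_cycleFactorsFinset_iff]
  refine ⟨isCycle_cyc hν f, fun x hx => ?_⟩
  rw [Equiv.Perm.mul_apply, tau_fix_of_subset hτ (by rwa [support_cyc hν f] at hx)]

lemma cycleOf_cyc (hν : 2 ≤ ν) (f : Fin ν ↪ Fin n) {τ : Equiv.Perm (Fin n)}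
    (hτ : τ.support ⊆ (Tset f)ᶜ) (i : Fin ν) :
    (cyc f * τ).cycleOf (f i) = cyc f :=
  (Equiv.Perm.cycle_is_cycleOf (by rw [support_cyc hν f]; exact mem_Tset f i)
    (cyc_mem_factors hν f hτ)).symm

lemma disjoint_cyc (hν : 2 ≤ ν) (f : Fin ν ↪ Fin n) {τ : Equiv.Perm (Fin n)}
    (hτ : τ.support ⊆ (Tset f)ᶜ) : (cyc f).Disjoint τ := by
  rw [Equiv.Perm.disjoint_iff_disjoint_support, support_cyc hν f]
  rw [Finset.disjoint_left]
  intro x hx hxs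
  exact absurd hx (by simpa using hτ hxs)

lemma fullCycleType_cyc_mul (hν : 2 ≤ ν) (f : Fin ν ↪ Fin n) {τ : Equiv.Perm (Fin n)}
    (hτ : τ.support ⊆ (Tset f)ᶜ) :
    fullCycleType (cyc f * τ)
      = ν ::ₘ (τ.cycleType + Multiset.replicate ((n - ν) - τ.cycleType.sum) 1) := by
  have hd := disjoint_cyc hν f hτ
  have hct : (cyc f * τ).cycleType = ν ::ₘ τ.cycleType := by
    rw [Equiv.Perm.Disjoint.cycleType_mul hd, (isCycle_cyc hν f).cycleType, support_cyc hν f, card_Tset]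
    rfl
  rw [fullCycleType_eq, hct]
  have hsum : (ν ::ₘ τ.cycleType).sum = ν + τ.cycleType.sum := by
    rw [Multiset.sum_cons]
  rw [hsum]
  have hsub : n - (ν + τ.cycleType.sum) = (n - ν) - τ.cycleType.sum := by omega
  rw [hsub, Multiset.cons_add]

lemma cond_weight (hν3 : 3 ≤ ν) (hodd : Odd ν) (hm : 1 ≤ m)
    (f : Fin ν ↪ Fin n) (τ : Equiv.Perm (Fin n)) (hτ : τ.support ⊆ (Tset f)ᶜ)
    (G : Multiset ℕ → ℕ) :
    (if cyc f * τ ∈ oddCyclePerms n m then G ((fullCycleType (cyc f * τ)).erase ν) else 0)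
      = FF (n - ν) (m - 1) G τ.cycleType := by
  have hFCT := fullCycleType_cyc_mul (by omega) f hτ
  have hcond : cyc f * τ ∈ oddCyclePerms n m ↔
      ((∀ μ ∈ τ.cycleType + Multiset.replicate ((n - ν) - τ.cycleType.sum) 1, Odd μ) ∧
        Multiset.card τ.cycleType + ((n - ν) - τ.cycleType.sum) = m - 1) := by
    rw [oddCyclePerms, Finset.mem_filter]
    simp only [Finset.mem_univ, true_and]
    rw [hFCT]
    constructor
    · rintro ⟨h1, h2⟩
      refine ⟨fun μ hμ => h1 μ (Multiset.mem_cons_of_mem hμ), ?_⟩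
      rw [Multiset.card_cons, Multiset.card_add, Multiset.card_replicate] at h2
      omega
    · rintro ⟨h1, h2⟩
      refine ⟨fun μ hμ => ?_, ?_⟩
      · rcases Multiset.mem_cons.mp hμ with h | h
        · rw [h]; exact hodd
        · exact h1 μ h
      · rw [Multiset.card_cons, Multiset.card_add, Multiset.card_replicate]
        omega
  rw [FF]
  by_cases hc : cyc f * τ ∈ oddCyclePerms n m
  · rw [if_pos hc, if_pos (hcond.mp hc), hFCT, Multiset.erase_cons_head]
  · rw [if_neg hc, if_neg (fun h => hc (hcond.mpr h))]

end L1main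

section L1top

variable {n ν m : ℕ}

lemma cyc_orbEmb (hνn : ν ≤ n) (σ : Equiv.Perm (Fin n)) (a : Fin n)
    (h : (σ.cycleOf a).support.card = ν) :
    cyc (orbEmb hνn σ a) = σ.cycleOf a := by
  rw [cyc, ofFn_orbEmb hνn σ a h, Equiv.Perm.formPerm_toList]

lemma Tset_orbEmb (hνn : ν ≤ n) (σ : Equiv.Perm (Fin n)) (a : Fin n)
    (h : (σ.cycleOf a).support.card = ν) :
    Tset (orbEmb hνn σ a) = (σ.cycleOf a).support := by
  rw [← toFinset_ofFn, ofFn_orbEmb hνn σ a h]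
  ext x
  rw [List.mem_toFinset, Equiv.Perm.mem_toList_iff, Equiv.Perm.mem_support_cycleOf_iff]

lemma remove_cycle (hν3 : 3 ≤ ν) (hodd : Odd ν) (hνn : ν ≤ n) (hm : 1 ≤ m)
    (G : Multiset ℕ → ℕ) :
    ν * ∑ σ ∈ oddCyclePerms n m, (fullCycleType σ).count ν * G ((fullCycleType σ).erase ν)
      = n.descFactorial ν * ∑ τ ∈ oddCyclePerms (n - ν) (m - 1), G (fullCycleType τ) := by
  classical
  have hν2 : 2 ≤ ν := by omega
  have hν0 : 0 < ν := by omega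
  -- Step 1 : organize the left hand side as a sum over marked permutations
  have step1 : ν * ∑ σ ∈ oddCyclePerms n m,
        (fullCycleType σ).count ν * G ((fullCycleType σ).erase ν)
      = ∑ p ∈ (Finset.univ ×ˢ Finset.univ : Finset (Equiv.Perm (Fin n) × Fin n)).filter
          (fun p => p.1 ∈ oddCyclePerms n m ∧ (p.1.cycleOf p.2).support.card = ν),
          G ((fullCycleType p.1).erase ν) := by
    rw [Finset.sum_filter, Finset.sum_product]
    have hL : ∀ X : Equiv.Perm (Fin n) → ℕ, ∑ σ ∈ oddCyclePerms n m, X σ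
        = ∑ σ : Equiv.Perm (Fin n), if σ ∈ oddCyclePerms n m then X σ else 0 := by
      intro X
      rw [Finset.sum_ite_mem, Finset.univ_inter]
    rw [hL, Finset.mul_sum]
    apply Finset.sum_congr rfl
    intro σ _
    by_cases hσ : σ ∈ oddCyclePerms n m
    · simp only [hσ, true_and, if_pos, mul_ite, mul_zero]
      rw [← Finset.sum_filter, Finset.sum_const, smul_eq_mul, nu_mul_count σ hν2]
      ring
    · simp [hσ]
  rw [step1]
  -- Step 2 : the bijection with (embedding, permutation of the complement) pairs
  have step2 : ∑ p ∈ (Finset.univ ×ˢ Finset.univ : Finset (Equiv.Perm (Fin n) × Fin n)).filter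
          (fun p => p.1 ∈ oddCyclePerms n m ∧ (p.1.cycleOf p.2).support.card = ν),
          G ((fullCycleType p.1).erase ν)
      = ∑ q ∈ (Finset.univ ×ˢ Finset.univ :
            Finset ((Fin ν ↪ Fin n) × Equiv.Perm (Fin n))).filter
          (fun q => q.2.support ⊆ (Tset q.1)ᶜ ∧ cyc q.1 * q.2 ∈ oddCyclePerms n m),
          G ((fullCycleType (cyc q.1 * q.2)).erase ν) := by
    apply Finset.sum_nbij'
      (i := fun p => (orbEmb hνn p.1 p.2, (p.1.cycleOf p.2)⁻¹ * p.1))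
      (j := fun q => (cyc q.1 * q.2, q.1 ⟨0, hν0⟩))
    · -- hi : maps into the target filter
      intro p hp
      rw [Finset.mem_filter] at hp ⊢
      obtain ⟨-, hpS, hpcard⟩ := hp
      have ha : p.2 ∈ p.1.support := by
        by_contra hna
        rw [(Equiv.Perm.cycleOf_eq_one_iff p.1).mpr (Equiv.Perm.notMem_support.mp hna)]
          at hpcard
        simp at hpcard; omega
      have hc : p.1.cycleOf p.2 ∈ p.1.cycleFactorsFinset :=
        Equiv.Perm.cycleOf_mem_cycleFactorsFinset_iff.mpr ha
      have hagree := (Equiv.Perm.mem_cycleFactorsFinset_iff.mp hc).2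
      refine ⟨Finset.mem_product.mpr ⟨Finset.mem_univ _, Finset.mem_univ _⟩, ?_, ?_⟩
      · intro x hx
        rw [Finset.mem_compl]
        intro hxT
        rw [Tset_orbEmb hνn p.1 p.2 hpcard] at hxT
        have : ((p.1.cycleOf p.2)⁻¹ * p.1) x = x := by
          rw [Equiv.Perm.mul_apply, ← hagree x hxT]
          simp
        exact Equiv.Perm.mem_support.mp hx this
      · rw [cyc_orbEmb hνn p.1 p.2 hpcard, mul_inv_cancel_left]
        exact hpS
    · -- hj : reverse map into source filter
      intro q hq
      rw [Finset.mem_filter] at hq ⊢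
      obtain ⟨-, hqsub, hqS⟩ := hq
      refine ⟨Finset.mem_product.mpr ⟨Finset.mem_univ _, Finset.mem_univ _⟩, hqS, ?_⟩
      rw [cycleOf_cyc hν2 q.1 hqsub, support_cyc hν2, card_Tset]
    · -- left inverse
      intro p hp
      rw [Finset.mem_filter] at hp
      have hpcard := hp.2.2
      ext1
      · simp only
        rw [cyc_orbEmb hνn p.1 p.2 hpcard, mul_inv_cancel_left]
      · simp only
        rw [orbEmb_apply hνn p.1 p.2 hpcard, pow_zero, Equiv.Perm.one_apply]
    · -- right inverse
      intro q hq
      rw [Finset.mem_filter] at hq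
      obtain ⟨-, hqsub, hqS⟩ := hq
      have hcard : ((cyc q.1 * q.2).cycleOf (q.1 ⟨0, hν0⟩)).support.card = ν := by
        rw [cycleOf_cyc hν2 q.1 hqsub, support_cyc hν2, card_Tset]
      ext1
      · -- embeddings are equal
        simp only
        apply DFunLike.ext
        intro i
        rw [orbEmb_apply hνn _ _ hcard]
        have hcomm : Commute (cyc q.1) q.2 := (disjoint_cyc hν2 q.1 hqsub).commute
        rw [Commute.mul_pow hcomm]
        have hτfix : (q.2 ^ (i : ℕ)) (q.1 ⟨0, hν0⟩) = q.1 ⟨0, hν0⟩ := by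
          apply Equiv.Perm.notMem_support.mp
          intro hmem
          have := Equiv.Perm.support_pow_le q.2 (i : ℕ) hmem
          have := hqsub this
          simp only [Finset.mem_compl] at this
          exact this (mem_Tset q.1 _)
        rw [Equiv.Perm.mul_apply, hτfix]
        have h0 : (0 : ℕ) < (List.ofFn q.1).length := by
          rw [List.length_ofFn]; omega
        have hilt : ((0 + (i : ℕ)) % (List.ofFn q.1).length) = (i : ℕ) := by
          rw [List.length_ofFn, Nat.zero_add, Nat.mod_eq_of_lt i.isLt]
        have hkey := List.formPerm_pow_apply_getElem (List.ofFn q.1)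
          (nodup_ofFn_emb q.1) (i : ℕ) 0 h0
        rw [List.getElem_ofFn] at hkey
        rw [cyc]
        rw [show (⟨0, by simpa using h0⟩ : Fin ν) = ⟨0, hν0⟩ from rfl] at hkey
        rw [hkey]
        rw [List.getElem_ofFn]
        congr 1
        exact Fin.ext (by simpa using hilt)
      · -- second components
        simp only
        rw [cycleOf_cyc hν2 q.1 hqsub, inv_mul_cancel_left]
    · -- weights agree
      intro p hp
      rw [Finset.mem_filter] at hp
      have hpcard := hp.2.2
      rw [cyc_orbEmb hνn p.1 p.2 hpcard, mul_inv_cancel_left]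
  rw [step2]
  -- Step 3 : evaluate the right-hand side sum
  have step3 : ∀ f : Fin ν ↪ Fin n,
      (∑ τ : Equiv.Perm (Fin n),
        if τ.support ⊆ (Tset f)ᶜ ∧ cyc f * τ ∈ oddCyclePerms n m then
          G ((fullCycleType (cyc f * τ)).erase ν) else 0)
      = ∑ τ' ∈ oddCyclePerms (n - ν) (m - 1), G (fullCycleType τ') := by
    intro f
    rw [← core_sum_odd (Tset f)ᶜ (n - ν) (m - 1)
      (by rw [Finset.card_compl, card_Tset, Fintype.card_fin]) G]
    apply Finset.sum_congr rfl
    intro τ _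
    by_cases hτ : τ.support ⊆ (Tset f)ᶜ
    · rw [if_pos hτ]
      rw [← cond_weight hν3 hodd hm f τ hτ G]
      by_cases hS : cyc f * τ ∈ oddCyclePerms n m
      · rw [if_pos ⟨hτ, hS⟩, if_pos hS]
      · rw [if_neg (fun h => hS h.2), if_neg hS]
    · rw [if_neg (fun h => hτ h.1), if_neg hτ]
  rw [Finset.sum_filter, Finset.sum_product]
  calc (∑ f : Fin ν ↪ Fin n, ∑ τ : Equiv.Perm (Fin n),
        if τ.support ⊆ (Tset f)ᶜ ∧ cyc f * τ ∈ oddCyclePerms n m then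
          G ((fullCycleType (cyc f * τ)).erase ν) else 0)
      = ∑ f : Fin ν ↪ Fin n, ∑ τ' ∈ oddCyclePerms (n - ν) (m - 1), G (fullCycleType τ') := by
        apply Finset.sum_congr rfl
        intro f _
        exact step3 f
    _ = n.descFactorial ν * ∑ τ ∈ oddCyclePerms (n - ν) (m - 1), G (fullCycleType τ) := by
        rw [Finset.sum_const, Finset.card_univ, Fintype.card_embedding_eq, smul_eq_mul,
          Fintype.card_fin, Fintype.card_fin]

end L1top

lemma msum_le_of_le {M N : Multiset ℕ} (h : M ≤ N) : M.sum ≤ N.sum := by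
  obtain ⟨u, rfl⟩ := Multiset.le_iff_exists_add.mp h
  rw [Multiset.sum_add]
  omega

lemma sum_map_pred (M : Multiset ℕ) (h1 : ∀ μ ∈ M, 1 ≤ μ) :
    (M.map (fun μ => μ - 1)).sum + Multiset.card M = M.sum := by
  induction M using Multiset.induction_on with
  | empty => simp
  | cons a s ih =>
    rw [Multiset.map_cons, Multiset.sum_cons, Multiset.sum_cons, Multiset.card_cons]
    have ha : 1 ≤ a := h1 a (Multiset.mem_cons_self a s)
    have := ih (fun μ hμ => h1 μ (Multiset.mem_cons_of_mem hμ))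
    omega

lemma sum_fullCycleType {n : ℕ} (σ : Equiv.Perm (Fin n)) : (fullCycleType σ).sum = n := by
  rw [fullCycleType_eq, Multiset.sum_add, Multiset.sum_replicate, smul_eq_mul, mul_one,
    Equiv.Perm.sum_cycleType]
  have : σ.support.card ≤ n := by
    have := Finset.card_le_univ σ.support
    simpa using this
  omega

section pointwise

variable {n m g : ℕ} {σ : Equiv.Perm (Fin n)}

lemma defect_eq (hσ : σ ∈ oddCyclePerms n m) (hm2g : m + 2 * g = n) :
    ((fullCycleType σ).map (fun μ => μ - 1)).sum = 2 * g := by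
  rw [oddCyclePerms, Finset.mem_filter] at hσ
  obtain ⟨-, hodd, hcard⟩ := hσ
  have h1 : ∀ μ ∈ fullCycleType σ, 1 ≤ μ := fun μ hμ => (hodd μ hμ).pos
  have := sum_map_pred (fullCycleType σ) h1
  rw [hcard, sum_fullCycleType σ] at this
  omega

lemma count_three_le (hσ : σ ∈ oddCyclePerms n m) (hm2g : m + 2 * g = n) :
    (fullCycleType σ).count 3 ≤ g := by
  have hle : Multiset.replicate ((fullCycleType σ).count 3) 3 ≤ fullCycleType σ := by
    rw [← Multiset.filter_eq]
    exact Multiset.filter_le _ _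
  have hmap := Multiset.map_le_map (f := fun μ => μ - 1) hle
  have hsum := msum_le_of_le hmap
  rw [Multiset.map_replicate, Multiset.sum_replicate, defect_eq hσ hm2g] at hsum
  simp at hsum
  omega

lemma card_le_fullCycleType_sub (hσ : σ ∈ oddCyclePerms n m) (hm2g : m + 2 * g = n) :
    n ≤ 3 * g + (fullCycleType σ).count 1 := by
  have hσ' := hσ
  rw [oddCyclePerms, Finset.mem_filter] at hσ'
  obtain ⟨-, hodd, hcard⟩ := hσ'
  set M := fullCycleType σ with hM
  set B := M.filter (fun μ => ¬ μ = 1) with hB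
  have hsplit : Multiset.count 1 M + Multiset.card B = m := by
    have hpart := Multiset.filter_add_not (fun μ => μ = 1) M
    have hcards := congrArg Multiset.card hpart
    rw [Multiset.card_add] at hcards
    rw [← hB] at hcards
    have hcnt : (M.filter (fun μ => μ = 1)).card = Multiset.count 1 M := by
      rw [Multiset.count_eq_card_filter_eq]
      congr 1
      apply Multiset.filter_congr
      intro μ _
      constructor <;> (intro h; omega)
    omega
  have h2B : 2 * Multiset.card B ≤ 2 * g := by
    have hle : B ≤ M := Multiset.filter_le _ _
    have hsum := msum_le_of_le (Multiset.map_le_map (f := fun μ => μ - 1) hle)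
    rw [defect_eq hσ hm2g] at hsum
    have hlow : Multiset.card (B.map fun μ => μ - 1) • 2 ≤ (B.map fun μ => μ - 1).sum := by
      apply Multiset.card_nsmul_le_sum
      intro x hx
      rw [Multiset.mem_map] at hx
      obtain ⟨μ, hμB, rfl⟩ := hx
      have hμM : μ ∈ M := Multiset.mem_of_le hle hμB
      have hμ1 : ¬ μ = 1 := (Multiset.mem_filter.mp hμB).2
      obtain ⟨k, hk⟩ := hodd μ hμM
      omega
    rw [Multiset.card_map, smul_eq_mul] at hlow
    omega
  omega

end pointwise

lemma descFactorial_add_eq (n a b : ℕ) :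
    n.descFactorial (a + b) = n.descFactorial a * (n - a).descFactorial b := by
  induction b with
  | zero => simp
  | succ b ih =>
    rw [← Nat.add_assoc, Nat.descFactorial_succ, ih, Nat.descFactorial_succ]
    have : n - (a + b) = n - a - b := by omega
    rw [this]
    ring

section chains

variable (G : Multiset ℕ → ℕ)

lemma stepS2 {n' g' m' : ℕ} (h : m' + 2 * g' = n') (hg' : 1 ≤ g') (hng : 3 * g' < n')
    (hG3 : ∀ M, G (M.erase 3) ≤ G M) :
    n'.descFactorial 3 * ∑ τ ∈ oddCyclePerms (n' - 3) (m' - 1), G (fullCycleType τ)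
      ≤ 3 * g' * ∑ σ ∈ oddCyclePerms n' m', G (fullCycleType σ) := by
  rw [← remove_cycle (le_refl 3) (by decide) (by omega) (by omega) G]
  calc 3 * ∑ σ ∈ oddCyclePerms n' m',
        (fullCycleType σ).count 3 * G ((fullCycleType σ).erase 3)
      ≤ 3 * ∑ σ ∈ oddCyclePerms n' m', g' * G (fullCycleType σ) := by
        apply Nat.mul_le_mul_left
        apply Finset.sum_le_sum
        intro σ hσ
        exact Nat.mul_le_mul (count_three_le hσ h) (hG3 _)
    _ = 3 * g' * ∑ σ ∈ oddCyclePerms n' m', G (fullCycleType σ) := by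
        rw [← Finset.mul_sum]; ring

lemma stepS3 {n' g' m' : ℕ} (h : m' + 2 * g' = n') (hng : 3 * g' < n')
    (hG1 : ∀ M, G (M.erase 1) = G M) :
    (n' - 3 * g') * ∑ σ ∈ oddCyclePerms n' m', G (fullCycleType σ)
      ≤ n' * ∑ τ ∈ oddCyclePerms (n' - 1) (m' - 1), G (fullCycleType τ) := by
  rw [← remove_fixed_point (by omega) G]
  calc (n' - 3 * g') * ∑ σ ∈ oddCyclePerms n' m', G (fullCycleType σ)
      = ∑ σ ∈ oddCyclePerms n' m', (n' - 3 * g') * G (fullCycleType σ) := by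
        rw [Finset.mul_sum]
    _ ≤ ∑ σ ∈ oddCyclePerms n' m',
          (fullCycleType σ).count 1 * G ((fullCycleType σ).erase 1) := by
        apply Finset.sum_le_sum
        intro σ hσ
        rw [hG1]
        apply Nat.mul_le_mul_right
        have := card_le_fullCycleType_sub hσ h
        omega

lemma chainA {n m g : ℕ} (hm2g : m + 2 * g = n) (hgn : 3 * g < n)
    (hG3 : ∀ M, G (M.erase 3) ≤ G M) :
    ∀ i, i ≤ g →
      n.descFactorial (3 * i) * ∑ τ ∈ oddCyclePerms (n - 3 * i) (m - i), G (fullCycleType τ)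
        ≤ (3 * g) ^ i * ∑ σ ∈ oddCyclePerms n m, G (fullCycleType σ) := by
  intro i
  induction i with
  | zero => simp
  | succ i ih =>
    intro hig
    have hig' : i ≤ g := by omega
    have hmg : g < m := by omega
    -- rewrite the (i+1) data
    have h1 : 3 * (i + 1) = 3 * i + 3 := by ring
    have h2 : n - (3 * i + 3) = (n - 3 * i) - 3 := by omega
    have h3 : m - (i + 1) = (m - i) - 1 := by omega
    rw [h1, h2, h3, descFactorial_add_eq]
    
    have hstep := stepS2 G (show (m - i) + 2 * (g - i) = n - 3 * i by omega)
      (show 1 ≤ g - i by omega) (show 3 * (g - i) < n - 3 * i by omega) hG3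
    calc n.descFactorial (3 * i) * (n - 3 * i).descFactorial 3 *
          ∑ τ ∈ oddCyclePerms (n - 3 * i - 3) (m - i - 1), G (fullCycleType τ)
        ≤ n.descFactorial (3 * i) *
            (3 * (g - i) * ∑ τ ∈ oddCyclePerms (n - 3 * i) (m - i), G (fullCycleType τ)) := by
          rw [Nat.mul_assoc]
          exact Nat.mul_le_mul_left _ hstep
      _ ≤ n.descFactorial (3 * i) *
            (3 * g * ∑ τ ∈ oddCyclePerms (n - 3 * i) (m - i), G (fullCycleType τ)) := by
          apply Nat.mul_le_mul_left
          apply Nat.mul_le_mul_right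
          omega
      _ = 3 * g * (n.descFactorial (3 * i) *
            ∑ τ ∈ oddCyclePerms (n - 3 * i) (m - i), G (fullCycleType τ)) := by ring
      _ ≤ 3 * g * ((3 * g) ^ i * ∑ σ ∈ oddCyclePerms n m, G (fullCycleType σ)) :=
          Nat.mul_le_mul_left _ (ih hig')
      _ = (3 * g) ^ (i + 1) * ∑ σ ∈ oddCyclePerms n m, G (fullCycleType σ) := by ring

lemma chainB {nb mb g' : ℕ} (hbase : mb + 2 * g' = nb) (hng : 3 * g' < nb)
    (hG1 : ∀ M, G (M.erase 1) = G M) :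
    ∀ j, (nb - 3 * g') ^ j * ∑ σ ∈ oddCyclePerms (nb + j) (mb + j), G (fullCycleType σ)
        ≤ (nb + j).descFactorial j * ∑ σ ∈ oddCyclePerms nb mb, G (fullCycleType σ) := by
  intro j
  induction j with
  | zero => simp
  | succ j ih =>
    have hstep := stepS3 G (show (mb + (j+1)) + 2 * g' = nb + (j+1) by omega)
      (show 3 * g' < nb + (j+1) by omega) hG1
    have hfac : nb - 3 * g' ≤ (nb + (j+1)) - 3 * g' := by omega
    calc (nb - 3 * g') ^ (j + 1) *
          ∑ σ ∈ oddCyclePerms (nb + (j+1)) (mb + (j+1)), G (fullCycleType σ)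
        = (nb - 3 * g') ^ j * ((nb - 3 * g') *
            ∑ σ ∈ oddCyclePerms (nb + (j+1)) (mb + (j+1)), G (fullCycleType σ)) := by ring
      _ ≤ (nb - 3 * g') ^ j * (((nb + (j+1)) - 3 * g') *
            ∑ σ ∈ oddCyclePerms (nb + (j+1)) (mb + (j+1)), G (fullCycleType σ)) := by
          apply Nat.mul_le_mul_left
          exact Nat.mul_le_mul_right _ hfac
      _ ≤ (nb - 3 * g') ^ j * ((nb + (j+1)) *
            ∑ σ ∈ oddCyclePerms (nb + (j+1) - 1) (mb + (j+1) - 1), G (fullCycleType σ)) := by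
          apply Nat.mul_le_mul_left
          exact hstep
      _ = (nb + (j+1)) * ((nb - 3 * g') ^ j *
            ∑ σ ∈ oddCyclePerms (nb + j) (mb + j), G (fullCycleType σ)) := by
          have e1 : nb + (j+1) - 1 = nb + j := by omega
          have e2 : mb + (j+1) - 1 = mb + j := by omega
          rw [e1, e2]; ring
      _ ≤ (nb + (j+1)) * ((nb + j).descFactorial j *
            ∑ σ ∈ oddCyclePerms nb mb, G (fullCycleType σ)) :=
          Nat.mul_le_mul_left _ ih
      _ = (nb + (j+1)).descFactorial (j + 1) *
            ∑ σ ∈ oddCyclePerms nb mb, G (fullCycleType σ) := by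
          have : nb + (j + 1) = (nb + j) + 1 := by omega
          rw [this, Nat.succ_descFactorial_succ]
          ring

lemma step_ineq {n g ν₀ k₀ : ℕ} (hν₀ : ν₀ = 2 * k₀ + 1) (hk₀ : 1 ≤ k₀) (hkg : k₀ ≤ g)
    (hgn : 3 * g < n) (hG1 : ∀ M, G (M.erase 1) = G M) (hG3 : ∀ M, G (M.erase 3) ≤ G M) :
    ν₀ * (n - 3 * g) ^ (k₀ - 1) *
        ∑ σ ∈ oddCyclePerms n (n - 2 * g),
          (fullCycleType σ).count ν₀ * G ((fullCycleType σ).erase ν₀)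
      ≤ (3 * g) ^ k₀ * ∑ σ ∈ oddCyclePerms n (n - 2 * g), G (fullCycleType σ) := by
  set m := n - 2 * g with hm
  have hm2g : m + 2 * g = n := by omega
  have hrc := remove_cycle (n := n) (ν := ν₀) (m := m) (by omega)
    (⟨k₀, by omega⟩) (by omega) (by omega) G
  have hB := chainB G (nb := n - 3 * k₀) (mb := m - k₀) (g' := g - k₀)
    (by omega) (by omega) hG1 (k₀ - 1)
  have hA := chainA G (n := n) (m := m) (g := g) hm2g hgn hG3 k₀ hkg
  have e1 : n - 3 * k₀ + (k₀ - 1) = n - ν₀ := by omega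
  have e2 : m - k₀ + (k₀ - 1) = m - 1 := by omega
  have e3 : n - 3 * k₀ - 3 * (g - k₀) = n - 3 * g := by omega
  rw [e1, e2, e3] at hB
  have hpos : 0 < n.descFactorial (3 * k₀) := by
    apply Nat.pos_of_ne_zero
    intro hzero
    rw [Nat.descFactorial_eq_zero_iff_lt] at hzero
    omega
  apply Nat.le_of_mul_le_mul_left (c := n.descFactorial (3 * k₀)) ?_ hpos
  calc n.descFactorial (3 * k₀) * (ν₀ * (n - 3 * g) ^ (k₀ - 1) *
          ∑ σ ∈ oddCyclePerms n m,
            (fullCycleType σ).count ν₀ * G ((fullCycleType σ).erase ν₀))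
      = n.descFactorial (3 * k₀) * (n - 3 * g) ^ (k₀ - 1) *
          (ν₀ * ∑ σ ∈ oddCyclePerms n m,
            (fullCycleType σ).count ν₀ * G ((fullCycleType σ).erase ν₀)) := by ring
    _ = n.descFactorial (3 * k₀) * (n - 3 * g) ^ (k₀ - 1) *
          (n.descFactorial ν₀ * ∑ τ ∈ oddCyclePerms (n - ν₀) (m - 1), G (fullCycleType τ)) := by
        rw [hrc]
    _ = n.descFactorial (3 * k₀) * (n.descFactorial ν₀ * ((n - 3 * g) ^ (k₀ - 1) *
          ∑ τ ∈ oddCyclePerms (n - ν₀) (m - 1), G (fullCycleType τ))) := by ring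
    _ ≤ n.descFactorial (3 * k₀) * (n.descFactorial ν₀ * ((n - ν₀).descFactorial (k₀ - 1) *
          ∑ σ ∈ oddCyclePerms (n - 3 * k₀) (m - k₀), G (fullCycleType σ))) := by
        apply Nat.mul_le_mul_left
        apply Nat.mul_le_mul_left
        exact hB
    _ = n.descFactorial (3 * k₀) * (n.descFactorial (3 * k₀) *
          ∑ σ ∈ oddCyclePerms (n - 3 * k₀) (m - k₀), G (fullCycleType σ)) := by
        have : n.descFactorial ν₀ * (n - ν₀).descFactorial (k₀ - 1)
            = n.descFactorial (3 * k₀) := by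
          rw [← descFactorial_add_eq]
          congr 1
          omega
        rw [← this]
        ring
    _ ≤ n.descFactorial (3 * k₀) *
          ((3 * g) ^ k₀ * ∑ σ ∈ oddCyclePerms n m, G (fullCycleType σ)) := by
        apply Nat.mul_le_mul_left
        exact hA

end chains

lemma mem_fullCycleType_le {n m g : ℕ} {σ : Equiv.Perm (Fin n)}
    (hσ : σ ∈ oddCyclePerms n m) (hm2g : m + 2 * g = n) {ν : ℕ}
    (hν : ν ∈ fullCycleType σ) : ν ≤ 2 * g + 1 := by
  have hd := defect_eq hσ hm2g
  have hmem : (ν - 1) ∈ (fullCycleType σ).map (fun μ => μ - 1) :=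
    Multiset.mem_map_of_mem _ hν
  have hle : ν - 1 ≤ ((fullCycleType σ).map (fun μ => μ - 1)).sum :=
    Multiset.single_le_sum (fun x _ => Nat.zero_le x) _ hmem
  omega

lemma desc_peel (x a : ℕ) : x.descFactorial (a + 1) = x * (x - 1).descFactorial a := by
  cases x with
  | zero => simp
  | succ y => rw [Nat.succ_descFactorial_succ]; simp

end OddCycleProof

/-- If `g < n/3` and `σ` is uniform on the permutations of `[n]` with all cycles of odd
length and exactly `n - 2g` cycles, then for any finitely supported sequence `(α_ν)` of
non-negative integers indexed by odd `ν ≥ 3`,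
`E[∏_ν (N_ν)_{α_ν}] ≤ ∏_ν λ_ν^{α_ν}` where `(x)_r` is the falling factorial,
`N_ν` the number of `ν`-cycles, and `λ_ν = (3g)^{(ν-1)/2}/(ν (n-3g)^{(ν-3)/2})`. -/

theorem expected_falling_factorial_cycle_counts_le (n g : ℕ) (α : ℕ →₀ ℕ)
    (hg : 3 * g < n) (hne : (oddCyclePerms n (n - 2 * g)).Nonempty)
    (hα : ∀ ν ∈ α.support, Odd ν ∧ 3 ≤ ν) :
    (∑ σ ∈ oddCyclePerms n (n - 2 * g),
        ∏ ν ∈ α.support, (Nat.descFactorial ((fullCycleType σ).count ν) (α ν) : ℚ))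
        / (oddCyclePerms n (n - 2 * g)).card
      ≤ ∏ ν ∈ α.support,
          ((3 * (g : ℚ)) ^ ((ν - 1) / 2) / (ν * ((n : ℚ) - 3 * g) ^ ((ν - 3) / 2))) ^ α ν := by
  classical
  open OddCycleProof in
  have hle3g : 3 * g ≤ n := le_of_lt hg
  set lam : ℕ → ℚ := fun ν =>
    (3 * (g : ℚ)) ^ ((ν - 1) / 2) / (ν * ((n : ℚ) - 3 * g) ^ ((ν - 3) / 2)) with hlam
  have hsubpos : (0 : ℚ) < (n : ℚ) - 3 * g := by
    have : ((3 * g : ℕ) : ℚ) < ((n : ℕ) : ℚ) := Nat.cast_lt.mpr hg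
    push_cast at this
    linarith
  have hlam_nonneg : ∀ ν, 0 ≤ lam ν := by
    intro ν
    apply div_nonneg
    · positivity
    · apply mul_nonneg (Nat.cast_nonneg ν)
      positivity
  have main : ∀ N (β : ℕ →₀ ℕ), (∑ μ ∈ β.support, β μ) ≤ N → β.support ⊆ α.support →
      ((∑ σ ∈ oddCyclePerms n (n - 2 * g), ∏ μ ∈ β.support,
          ((fullCycleType σ).count μ).descFactorial (β μ) : ℕ) : ℚ)
        ≤ (∏ μ ∈ β.support, lam μ ^ β μ) * (oddCyclePerms n (n - 2 * g)).card := by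
    intro N
    induction N with
    | zero =>
      intro β hN hsub
      have hβ0 : β = 0 := by
        ext μ
        simp only [Finsupp.coe_zero, Pi.zero_apply]
        by_cases hμ : μ ∈ β.support
        · have h1 : β μ ≤ ∑ x ∈ β.support, β x :=
            Finset.single_le_sum (fun i _ => Nat.zero_le (β i)) hμ
          omega
        · simpa using Finsupp.notMem_support_iff.mp hμ
      subst hβ0
      simp
    | succ N ih =>
      intro β hN hsub
      by_cases hβ0 : β = 0
      · subst hβ0
        simp
      obtain ⟨ν₀, hν₀supp⟩ := Finsupp.support_nonempty_iff.mpr hβ0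
      obtain ⟨hodd₀, h3₀⟩ := hα ν₀ (hsub hν₀supp)
      obtain ⟨c₀, hc₀⟩ := hodd₀
      set k₀ := (ν₀ - 1) / 2 with hk₀def
      have hk₀eq : ν₀ = 2 * k₀ + 1 := by omega
      have hk₀1 : 1 ≤ k₀ := by omega
      have hβν₀pos : 1 ≤ β ν₀ :=
        Nat.one_le_iff_ne_zero.mpr (Finsupp.mem_support_iff.mp hν₀supp)
      set β' : ℕ →₀ ℕ := β - Finsupp.single ν₀ 1 with hβ'def
      have hβ'ν₀ : β' ν₀ = β ν₀ - 1 := by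
        rw [hβ'def, Finsupp.tsub_apply, Finsupp.single_eq_same]
      have hβ'ne : ∀ μ, μ ≠ ν₀ → β' μ = β μ := by
        intro μ hμ
        rw [hβ'def, Finsupp.tsub_apply, Finsupp.single_eq_of_ne' (Ne.symm hμ), Nat.sub_zero]
      have hsub' : β'.support ⊆ β.support := by
        intro μ hμ
        rw [Finsupp.mem_support_iff] at hμ ⊢
        by_cases h : μ = ν₀
        · subst h; omega
        · rwa [hβ'ne μ h] at hμ
      have hsum' : (∑ μ ∈ β'.support, β' μ) ≤ N := by
        have h1 : (∑ μ ∈ β'.support, β' μ) ≤ ∑ μ ∈ β.support, β' μ :=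
          Finset.sum_le_sum_of_subset hsub'
        have h2 : (∑ μ ∈ β.support.erase ν₀, β' μ) + β' ν₀ = ∑ μ ∈ β.support, β' μ :=
          Finset.sum_erase_add _ _ hν₀supp
        have h3 : (∑ μ ∈ β.support.erase ν₀, β μ) + β ν₀ = ∑ μ ∈ β.support, β μ :=
          Finset.sum_erase_add _ _ hν₀supp
        have h4 : (∑ μ ∈ β.support.erase ν₀, β' μ) = ∑ μ ∈ β.support.erase ν₀, β μ :=
          Finset.sum_congr rfl (fun μ hμ => hβ'ne μ (Finset.ne_of_mem_erase hμ))
        omega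
      set Gf : Multiset ℕ → ℕ :=
        fun M => ∏ μ ∈ β.support, (M.count μ).descFactorial (β' μ) with hGf
      have hG1 : ∀ M, Gf (M.erase 1) = Gf M := by
        intro M
        apply Finset.prod_congr rfl
        intro μ hμ
        have h3 : 3 ≤ μ := (hα μ (hsub hμ)).2
        rw [Multiset.count_erase_of_ne (by omega)]
      have hG3 : ∀ M, Gf (M.erase 3) ≤ Gf M := by
        intro M
        apply Finset.prod_le_prod'
        intro μ hμ
        apply Nat.descFactorial_le
        by_cases h : μ = 3
        · subst h; rw [Multiset.count_erase_self]; omega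
        · rw [Multiset.count_erase_of_ne h]
      have hconn1 : ∀ σ : Equiv.Perm (Fin n),
          (∏ μ ∈ β.support, ((fullCycleType σ).count μ).descFactorial (β μ))
            = (fullCycleType σ).count ν₀ * Gf ((fullCycleType σ).erase ν₀) := by
        intro σ
        rw [← Finset.mul_prod_erase _ _ hν₀supp]
        simp only [hGf]
        rw [← Finset.mul_prod_erase (f := fun μ =>
          (((fullCycleType σ).erase ν₀).count μ).descFactorial (β' μ)) _ hν₀supp]
        have hrest : (∏ μ ∈ β.support.erase ν₀,
              ((fullCycleType σ).count μ).descFactorial (β μ))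
            = ∏ μ ∈ β.support.erase ν₀,
              (((fullCycleType σ).erase ν₀).count μ).descFactorial (β' μ) := by
          apply Finset.prod_congr rfl
          intro μ hμ
          have hne : μ ≠ ν₀ := Finset.ne_of_mem_erase hμ
          rw [Multiset.count_erase_of_ne hne, hβ'ne μ hne]
        rw [hrest, Multiset.count_erase_self]
        have hsplit : β ν₀ = β' ν₀ + 1 := by omega
        rw [hsplit, desc_peel]
        ring
      have hconn2 : ∀ σ : Equiv.Perm (Fin n),
          Gf (fullCycleType σ)
            = ∏ μ ∈ β'.support, ((fullCycleType σ).count μ).descFactorial (β' μ) := by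
        intro σ
        rw [hGf]
        exact (Finset.prod_subset hsub' (fun μ _ hnμ => by
          rw [Finsupp.notMem_support_iff.mp hnμ, Nat.descFactorial_zero])).symm
      by_cases hkg : k₀ ≤ g
      · -- main case : use the chain inequality
        have hstep := step_ineq Gf hk₀eq hk₀1 hkg hg hG1 hG3
        rw [show (∑ σ ∈ oddCyclePerms n (n - 2 * g),
            (fullCycleType σ).count ν₀ * Gf ((fullCycleType σ).erase ν₀))
          = ∑ σ ∈ oddCyclePerms n (n - 2 * g), ∏ μ ∈ β.support,
              ((fullCycleType σ).count μ).descFactorial (β μ) from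
          Finset.sum_congr rfl (fun σ _ => (hconn1 σ).symm)] at hstep
        rw [show (∑ σ ∈ oddCyclePerms n (n - 2 * g), Gf (fullCycleType σ))
          = ∑ σ ∈ oddCyclePerms n (n - 2 * g), ∏ μ ∈ β'.support,
              ((fullCycleType σ).count μ).descFactorial (β' μ) from
          Finset.sum_congr rfl (fun σ _ => hconn2 σ)] at hstep
        set Aβ : ℕ := ∑ σ ∈ oddCyclePerms n (n - 2 * g), ∏ μ ∈ β.support,
            ((fullCycleType σ).count μ).descFactorial (β μ) with hAβ
        set Aβ' : ℕ := ∑ σ ∈ oddCyclePerms n (n - 2 * g), ∏ μ ∈ β'.support,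
            ((fullCycleType σ).count μ).descFactorial (β' μ) with hAβ'
        have hQ : (ν₀ : ℚ) * ((n : ℚ) - 3 * g) ^ (k₀ - 1) * (Aβ : ℚ)
            ≤ (3 * (g : ℚ)) ^ k₀ * (Aβ' : ℚ) := by
          have hcast := (Nat.cast_le (α := ℚ)).mpr hstep
          push_cast [Nat.cast_sub hle3g] at hcast
          calc (ν₀ : ℚ) * ((n : ℚ) - 3 * g) ^ (k₀ - 1) * (Aβ : ℚ)
              = (ν₀ : ℚ) * ((n : ℚ) - 3 * ↑g) ^ (k₀ - 1) * (Aβ : ℚ) := by ring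
            _ ≤ (3 * (g : ℚ)) ^ k₀ * (Aβ' : ℚ) := by
                convert hcast using 2
        have hD : (0 : ℚ) < (ν₀ : ℚ) * ((n : ℚ) - 3 * g) ^ (k₀ - 1) := by
          apply mul_pos
          · exact_mod_cast Nat.pos_of_ne_zero (by omega)
          · positivity
        have hlamν₀ : lam ν₀
            = (3 * (g : ℚ)) ^ k₀ / ((ν₀ : ℚ) * ((n : ℚ) - 3 * g) ^ (k₀ - 1)) := by
          have e1 : (ν₀ - 1) / 2 = k₀ := by omega
          have e2 : (ν₀ - 3) / 2 = k₀ - 1 := by omega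
          rw [hlam]
          simp only [e1, e2]
        have hkey : (Aβ : ℚ) ≤ lam ν₀ * (Aβ' : ℚ) := by
          rw [hlamν₀, div_mul_eq_mul_div, le_div_iff₀ hD]
          calc (Aβ : ℚ) * ((ν₀ : ℚ) * ((n : ℚ) - 3 * g) ^ (k₀ - 1))
              = (ν₀ : ℚ) * ((n : ℚ) - 3 * g) ^ (k₀ - 1) * (Aβ : ℚ) := by ring
            _ ≤ (3 * (g : ℚ)) ^ k₀ * (Aβ' : ℚ) := hQ
        have hIH := ih β' hsum' (hsub'.trans hsub)
        have hprod : lam ν₀ * ∏ μ ∈ β'.support, lam μ ^ β' μ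
            = ∏ μ ∈ β.support, lam μ ^ β μ := by
          have hp1 : (∏ μ ∈ β'.support, lam μ ^ β' μ)
              = ∏ μ ∈ β.support, lam μ ^ β' μ :=
            Finset.prod_subset hsub' (fun μ _ hnμ => by
              rw [Finsupp.notMem_support_iff.mp hnμ, pow_zero])
          rw [hp1, ← Finset.mul_prod_erase _ (fun μ => lam μ ^ β' μ) hν₀supp,
            ← Finset.mul_prod_erase _ (fun μ => lam μ ^ β μ) hν₀supp]
          have hp2 : (∏ μ ∈ β.support.erase ν₀, lam μ ^ β' μ)
              = ∏ μ ∈ β.support.erase ν₀, lam μ ^ β μ :=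
            Finset.prod_congr rfl (fun μ hμ => by
              rw [hβ'ne μ (Finset.ne_of_mem_erase hμ)])
          rw [hp2, show β ν₀ = β' ν₀ + 1 from by omega, pow_succ]
          ring
        calc (Aβ : ℚ) ≤ lam ν₀ * (Aβ' : ℚ) := hkey
          _ ≤ lam ν₀ * ((∏ μ ∈ β'.support, lam μ ^ β' μ)
                * (oddCyclePerms n (n - 2 * g)).card) :=
              mul_le_mul_of_nonneg_left hIH (hlam_nonneg ν₀)
          _ = (lam ν₀ * ∏ μ ∈ β'.support, lam μ ^ β' μ)
                * (oddCyclePerms n (n - 2 * g)).card := by ring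
          _ = (∏ μ ∈ β.support, lam μ ^ β μ) * (oddCyclePerms n (n - 2 * g)).card := by
              rw [hprod]
      · -- degenerate case : the left-hand side vanishes
        have hzero : ∀ σ ∈ oddCyclePerms n (n - 2 * g),
            (∏ μ ∈ β.support, ((fullCycleType σ).count μ).descFactorial (β μ)) = 0 := by
          intro σ hσ
          apply Finset.prod_eq_zero hν₀supp
          have hcount : (fullCycleType σ).count ν₀ = 0 := by
            rw [Multiset.count_eq_zero]
            intro hmem
            have := mem_fullCycleType_le hσ (show (n - 2 * g) + 2 * g = n by omega) hmem
            omega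
          rw [hcount, show β ν₀ = (β ν₀ - 1) + 1 from by omega,
            Nat.zero_descFactorial_succ]
        rw [Finset.sum_eq_zero hzero]
        push_cast
        apply mul_nonneg
        · exact Finset.prod_nonneg (fun μ _ => pow_nonneg (hlam_nonneg μ) _)
        · exact Nat.cast_nonneg _
  have hcardpos : (0 : ℚ) < (oddCyclePerms n (n - 2 * g)).card :=
    Nat.cast_pos.mpr (Finset.card_pos.mpr hne)
  rw [div_le_iff₀ hcardpos]
  have hmain := main (∑ μ ∈ α.support, α μ) α le_rfl (Finset.Subset.refl _)
  calc (∑ σ ∈ oddCyclePerms n (n - 2 * g), ∏ ν ∈ α.support,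
        ((Nat.descFactorial ((fullCycleType σ).count ν) (α ν) : ℚ)))
      = ((∑ σ ∈ oddCyclePerms n (n - 2 * g), ∏ ν ∈ α.support,
          ((fullCycleType σ).count ν).descFactorial (α ν) : ℕ) : ℚ) := by
        push_cast
        rfl
    _ ≤ (∏ ν ∈ α.support, lam ν ^ α ν) * (oddCyclePerms n (n - 2 * g)).card := hmain
end
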